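/- Let ŵ, τ̂₁², τ̂₂² be fixed with τ̂₁², τ̂₂² ∈ [c, C] and |ŵ| ≤ C for some 0 < c ≤ C. For any M > 0 there exist W, l, L > 0 such that for every (w, τ₁², τ₂²) ∈ (ℝ × (0,∞)²) \ ([−W, W] × [l, L] × [l, L]), the function g(w, τ₁², τ₂²) = −(1/2)[(w − ŵ)² τ̂₂² / τ₁² + φ(τ̂₁²/τ₁²) + φ(τ̂₂²/τ₂²)] satisfies g(w, τ₁², τ₂²) < −M, where φ(u) = u − 1 − log u. -/

import Mathlib

/-- `φ(u) = u - 1 - log u`. -/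
noncomputable def phiFn (u : ℝ) : ℝ := u - 1 - Real.log u

/-- The normalized log-likelihood difference `g` for the bivariate Gaussian SEM. -/
noncomputable def gFn (wHat t1Hat t2Hat : ℝ) (w τ1 τ2 : ℝ) : ℝ :=
  -(1 / 2) * ((w - wHat) ^ 2 * t2Hat / τ1 + phiFn (t1Hat / τ1) + phiFn (t2Hat / τ2))

/-!
Every summand of `-2 g` is nonnegative, since `φ ≥ 0` by `log u ≤ u - 1`, so it suffices that one
of them exceeds `2M` off the box. `φ` is coercive at both ends: `φ u ≥ u / 2 - 1` as `u → ∞` and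
`φ u ≥ -1 - log u` as `u → 0`; with `τ̂ᵢ² ∈ [c, C]` this handles `τᵢ²` below `l` or above `L`
uniformly. Once `τ₁² ≤ L`, the quadratic term is at least `(w - ŵ)² c / L`, which is large once
`|w|` is large, because `|ŵ| ≤ C`.
-/

open Real Set

lemma phiFn_nonneg {u : ℝ} (hu : 0 < u) : 0 ≤ phiFn u := by
  have := log_le_sub_one_of_pos hu
  unfold phiFn
  linarith

lemma half_sub_one_le_phiFn {u : ℝ} (hu : 0 < u) : u / 2 - 1 ≤ phiFn u := by
  have hhalf := log_le_sub_one_of_pos (half_pos hu)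
  have hsplit : log u = log 2 + log (u / 2) := by
    rw [← log_mul two_ne_zero (half_pos hu).ne']
    ring_nf
  have := log_two_lt_d9
  unfold phiFn
  linarith

lemma neg_one_sub_log_le_phiFn {u : ℝ} (hu : 0 ≤ u) : -1 - log u ≤ phiFn u := by
  unfold phiFn
  linarith

lemma lt_phiFn_div_of_mul_lt {K t τ : ℝ} (ht : 0 < t) (hτ : 0 < τ) (h : τ * (2 * K + 2) < t) :
    K < phiFn (t / τ) := by
  have hu : 2 * K + 2 < t / τ := by rwa [lt_div_iff₀ hτ, mul_comm]
  have := half_sub_one_le_phiFn (div_pos ht hτ)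
  linarith

lemma lt_phiFn_div_of_mul_exp_lt {K t τ : ℝ} (ht : 0 < t) (h : t * exp (K + 1) < τ) :
    K < phiFn (t / τ) := by
  have hτ : 0 < τ := (mul_pos ht (exp_pos _)).trans h
  have hlog : log (t / τ) < -(K + 1) := by
    rw [log_div ht.ne' hτ.ne']
    have := log_lt_log (by positivity) h
    rw [log_mul ht.ne' (exp_ne_zero _), log_exp] at this
    linarith
  have := neg_one_sub_log_le_phiFn (div_pos ht hτ).le
  linarith

lemma lt_phiFn_div_of_notMem_Icc {K c C t τ : ℝ} (hK : 0 ≤ K) (hc : 0 < c) (ht : t ∈ Icc c C)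
    (hτ : 0 < τ) (h : τ ∉ Icc (c / (2 * K + 2)) (C * exp (K + 1))) : K < phiFn (t / τ) := by
  obtain ⟨hct, htC⟩ := ht
  rcases not_and_or.mp h with hl | hL
  · have : τ * (2 * K + 2) < c := (lt_div_iff₀ (by positivity)).mp (not_le.mp hl)
    exact lt_phiFn_div_of_mul_lt (hc.trans_le hct) hτ (this.trans_le hct)
  · refine lt_phiFn_div_of_mul_exp_lt (hc.trans_le hct) ?_
    calc t * exp (K + 1) ≤ C * exp (K + 1) := by gcongr
      _ < τ := not_le.mp hL

lemma lt_sq_mul_div_of_lt_abs {K c C L t τ x xHat : ℝ} (hK : 0 ≤ K) (hc : 0 < c) (hct : c ≤ t)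
    (hτ : 0 < τ) (hτL : τ ≤ L) (hxHat : |xHat| ≤ C) (hx : C + K * L / c + 1 < |x|) :
    K < (x - xHat) ^ 2 * t / τ := by
  have hKLc : 0 ≤ K * L / c := by have : 0 < L := hτ.trans_le hτL; positivity
  have hdist : K * L / c + 1 < |x - xHat| := by
    have := abs_sub_abs_le_abs_sub x xHat
    linarith
  have hsq : K * L / c < (x - xHat) ^ 2 := by
    rw [← sq_abs]
    nlinarith
  calc K = K * L / c * c / L := by field_simp [(hτ.trans_le hτL).ne']
    _ < (x - xHat) ^ 2 * c / L := by gcongr; exact hτ.trans_le hτL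
    _ ≤ (x - xHat) ^ 2 * t / τ := by have := hc.trans_le hct; gcongr

theorem stmt_7_general (c C : ℝ) (hc : 0 < c)
    (wHat t1Hat t2Hat : ℝ)
    (h1 : t1Hat ∈ Set.Icc c C) (h2 : t2Hat ∈ Set.Icc c C) (hw : |wHat| ≤ C)
    (M : ℝ) (hM : 0 < M) :
    ∃ W l L : ℝ, 0 < W ∧ 0 < l ∧ 0 < L ∧
      ∀ w τ1 τ2 : ℝ, 0 < τ1 → 0 < τ2 →
        ¬(w ∈ Set.Icc (-W) W ∧ τ1 ∈ Set.Icc l L ∧ τ2 ∈ Set.Icc l L) →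
        gFn wHat t1Hat t2Hat w τ1 τ2 < -M := by
  have hC : 0 < C := hc.trans_le (h1.1.trans h1.2)
  set l := c / (2 * (2 * M) + 2)
  set L := C * exp (2 * M + 1)
  refine ⟨C + 2 * M * L / c + 1, l, L, by positivity, by positivity, by positivity, ?_⟩
  intro w τ1 τ2 hτ1 hτ2 hout
  have hc2 : c ≤ t2Hat := h2.1
  have hquad : 0 ≤ (w - wHat) ^ 2 * t2Hat / τ1 := by have := hc.trans_le hc2; positivity
  have hφ1 := phiFn_nonneg (div_pos (hc.trans_le h1.1) hτ1)
  have hφ2 := phiFn_nonneg (div_pos (hc.trans_le hc2) hτ2)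
  suffices 2 * M < (w - wHat) ^ 2 * t2Hat / τ1 + phiFn (t1Hat / τ1) + phiFn (t2Hat / τ2) by
    unfold gFn
    linarith
  by_cases hτ1m : τ1 ∈ Icc l L
  · by_cases hτ2m : τ2 ∈ Icc l L
    · have hw' : C + 2 * M * L / c + 1 < |w| := by
        by_contra! hle
        exact hout ⟨abs_le.mp hle, hτ1m, hτ2m⟩
      have := lt_sq_mul_div_of_lt_abs (by positivity) hc hc2 hτ1 hτ1m.2 hw hw'
      linarith
    · have := lt_phiFn_div_of_notMem_Icc (by positivity) hc h2 hτ2 hτ2m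
      linarith
  · have := lt_phiFn_div_of_notMem_Icc (by positivity) hc h1 hτ1 hτ1m
    linarith

theorem stmt_7 (c C : ℝ) (hc : 0 < c) (hcC : c ≤ C)
    (wHat t1Hat t2Hat : ℝ)
    (h1 : t1Hat ∈ Set.Icc c C) (h2 : t2Hat ∈ Set.Icc c C) (hw : |wHat| ≤ C)
    (M : ℝ) (hM : 0 < M) :
    ∃ W l L : ℝ, 0 < W ∧ 0 < l ∧ 0 < L ∧
      ∀ w τ1 τ2 : ℝ, 0 < τ1 → 0 < τ2 →
        ¬(w ∈ Set.Icc (-W) W ∧ τ1 ∈ Set.Icc l L ∧ τ2 ∈ Set.Icc l L) →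
        gFn wHat t1Hat t2Hat w τ1 τ2 < -M :=
  stmt_7_general c C hc wHat t1Hat t2Hat h1 h2 hw M hM
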